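/- Let X be an inner product space over ℝ with complexification X_ℂ = X + iX (carrying the induced complex inner product), and let g : (T, ∞) → X for some T ∈ ℝ. Suppose g, viewed as an X_ℂ-valued function, has an asymptotic expansion g(t) ∼ Σ_{k=1}^∞ g_k(t) with g_k ∈ 𝓕_E(−μ_k, X_ℂ), where (μ_k) is a strictly increasing divergent sequence of nonnegative reals. Then g_k(t) ∈ X for all k ∈ ℕ and all t ∈ ℝ. -/

import Mathlib

open Filter

/-- `p : ℝ → Y` is a `Y`-valued polynomial (with `Y` a complex linear space). -/
def IsPolyFun {Y : Type*} [AddCommGroup Y] [Module ℂ Y] (p : ℝ → Y) : Prop :=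
  ∃ (d : ℕ) (c : ℕ → Y), ∀ t : ℝ, p t = ∑ j ∈ Finset.range (d + 1), ((t : ℂ) ^ j) • c j

/-- Membership in the class `𝓕_E(μ, Y)`. -/
def FEmem {Y : Type*} [AddCommGroup Y] [Module ℂ Y] (μ : ℝ) (g : ℝ → Y) : Prop :=
  ∃ (S : Finset ℂ) (p : ℂ → ℝ → Y),
    (∀ l ∈ S, l.re = μ) ∧ (∀ l ∈ S, IsPolyFun (p l)) ∧
    ∀ t : ℝ, g t = ∑ l ∈ S, Complex.exp (l * t) • p l t

/-!
Induct on `k`. If `g_j` is `X`-valued for `j < k`, then, since `g` is `X`-valued and the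
conjugation is isometric, `g_k - conj g_k = conj R - R` for the `k`-th remainder `R`; so it lies in
`𝓕_E(-μ_k)` and is `O(e^{-νt})` with `ν > μ_k`. Such a function vanishes: applying a dual vector
and multiplying by `e^{μ_k t}` gives a scalar sum `∑ p_λ(t) e^{λt}` with purely imaginary `λ` that
tends to `0`. Dividing by `t^d` leaves the trigonometric polynomial of the top coefficients
tending to `0`, and its mean against `e^{-λ₀t}` over `[T, 2T]` tends to the coefficient of `λ₀`.
-/

open Polynomial Topology

noncomputable def dyadicMean (f : ℝ → ℂ) (T : ℝ) : ℂ := (T : ℂ)⁻¹ * ∫ t in T..2 * T, f t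

lemma norm_cexp_mul_le_one {z : ℂ} (hz : z.re ≤ 0) {t : ℝ} (ht : 0 ≤ t) :
    ‖Complex.exp (z * t)‖ ≤ 1 := by
  rw [Complex.norm_exp, Real.exp_le_one_iff, Complex.re_mul_ofReal]
  exact mul_nonpos_of_nonpos_of_nonneg hz ht

lemma isBoundedUnder_norm_cexp {z : ℂ} (hz : z.re ≤ 0) :
    IsBoundedUnder (· ≤ ·) atTop (norm ∘ fun t : ℝ => Complex.exp (z * t)) :=
  isBoundedUnder_of_eventually_le (a := 1) <|
    (eventually_ge_atTop 0).mono fun _ ht => norm_cexp_mul_le_one hz ht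

lemma tendsto_ofReal_inv_atTop_zero : Tendsto (fun T : ℝ => (T : ℂ)⁻¹) atTop (𝓝 0) := by
  simpa only [Function.comp_def, Complex.ofReal_inv, Complex.ofReal_zero] using
    (Complex.continuous_ofReal.tendsto 0).comp tendsto_inv_atTop_zero

lemma tendsto_dyadicMean_of_tendsto_zero {f : ℝ → ℂ} (hf : Tendsto f atTop (𝓝 0)) :
    Tendsto (dyadicMean f) atTop (𝓝 0) := by
  rw [NormedAddGroup.tendsto_nhds_zero] at hf ⊢
  intro ε hε
  obtain ⟨T₀, hT₀⟩ := eventually_atTop.mp (hf (ε / 2) (half_pos hε))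
  filter_upwards [eventually_ge_atTop T₀, eventually_gt_atTop 0] with T hT hT0
  have hint : ‖∫ t in T..2 * T, f t‖ ≤ ε / 2 * |2 * T - T| :=
    intervalIntegral.norm_integral_le_of_norm_le_const fun t ht => by
      rw [Set.uIoc_of_le (by linarith)] at ht
      exact (hT₀ t (by linarith [ht.1])).le
  calc ‖dyadicMean f T‖ = T⁻¹ * ‖∫ t in T..2 * T, f t‖ := by
        rw [dyadicMean, norm_mul, norm_inv, Complex.norm_real, Real.norm_of_nonneg hT0.le]
    _ ≤ T⁻¹ * (ε / 2 * T) := by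
        rw [show 2 * T - T = T by ring, abs_of_pos hT0] at hint
        gcongr
    _ < ε := by field_simp; linarith

lemma tendsto_dyadicMean_cexp {z : ℂ} (hz : z.re ≤ 0) :
    Tendsto (dyadicMean fun t => Complex.exp (z * t)) atTop (𝓝 (if z = 0 then 1 else 0)) := by
  split_ifs with h
  · refine tendsto_const_nhds.congr' ?_
    filter_upwards [eventually_ne_atTop 0] with T hT
    simp [dyadicMean, h, two_mul, hT]
  · have hbdd : ∀ᶠ T : ℝ in atTop, ‖∫ t in T..2 * T, Complex.exp (z * t)‖ ≤ 2 / ‖z‖ := by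
      filter_upwards [eventually_ge_atTop 0] with T hT
      rw [integral_exp_mul_complex h, norm_div]
      gcongr
      refine (norm_sub_le _ _).trans ?_
      linarith [norm_cexp_mul_le_one hz (by linarith : 0 ≤ 2 * T), norm_cexp_mul_le_one hz hT]
    exact tendsto_ofReal_inv_atTop_zero.zero_mul_isBoundedUnder_le
      (isBoundedUnder_of_eventually_le hbdd)

lemma eq_zero_of_tendsto_sum_cexp_mul {S : Finset ℂ} (hS : ∀ l ∈ S, l.re = 0) (a : ℂ → ℂ)
    (h : Tendsto (fun t : ℝ => ∑ l ∈ S, Complex.exp (l * t) * a l) atTop (𝓝 0)) :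
    ∀ l ∈ S, a l = 0 := by
  intro l₀ hl₀
  have hmean : Tendsto (dyadicMean fun t => ∑ l ∈ S, Complex.exp ((l - l₀) * t) * a l) atTop
      (𝓝 0) := by
    refine tendsto_dyadicMean_of_tendsto_zero ((h.zero_mul_isBoundedUnder_le
      (isBoundedUnder_norm_cexp (z := -l₀) (by simp [hS l₀ hl₀]))).congr fun t => ?_)
    rw [Finset.sum_mul]
    refine Finset.sum_congr rfl fun l _ => ?_
    rw [sub_mul, sub_eq_add_neg, Complex.exp_add, ← neg_mul]
    ring
  have hsum : ∀ T, dyadicMean (fun t => ∑ l ∈ S, Complex.exp ((l - l₀) * t) * a l) T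
      = ∑ l ∈ S, dyadicMean (fun t => Complex.exp ((l - l₀) * t)) T * a l := by
    intro T
    simp only [dyadicMean]
    rw [intervalIntegral.integral_finsetSum fun l _ =>
      (by fun_prop : Continuous _).intervalIntegrable _ _]
    simp only [Finset.mul_sum, intervalIntegral.integral_mul_const, mul_assoc]
  have hlim := tendsto_finsetSum S fun l hl =>
    (tendsto_dyadicMean_cexp (z := l - l₀) (by simp [hS l hl, hS l₀ hl₀])).mul_const (a l)
  simp only [sub_eq_zero, ite_mul, one_mul, zero_mul, Finset.sum_ite_eq', if_pos hl₀] at hlim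
  exact tendsto_nhds_unique (hlim.congr fun T => (hsum T).symm) hmean

lemma tendsto_eval_div_pow {P : ℂ[X]} {d : ℕ} (hP : P.natDegree ≤ d) :
    Tendsto (fun t : ℝ => P.eval (t : ℂ) / (t : ℂ) ^ d) atTop (𝓝 (P.coeff d)) := by
  have hterm : ∀ j ∈ Finset.range (d + 1),
      Tendsto (fun t : ℝ => P.coeff j * (t : ℂ) ^ j / (t : ℂ) ^ d) atTop
        (𝓝 (if j = d then P.coeff d else 0)) := by
    intro j hj
    split_ifs with hjd
    · refine tendsto_const_nhds.congr' ?_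
      filter_upwards [eventually_ne_atTop 0] with t ht
      simp [hjd, ht]
    · have hpow := (tendsto_ofReal_inv_atTop_zero.pow (d - j)).const_mul (P.coeff j)
      rw [zero_pow (by grind), mul_zero] at hpow
      refine hpow.congr' ?_
      filter_upwards [eventually_ne_atTop 0] with t ht
      rw [inv_pow, pow_sub₀ _ (by exact_mod_cast ht) (by grind), mul_inv, inv_inv]
      ring
  have hsum := tendsto_finsetSum _ hterm
  rw [Finset.sum_ite_eq', if_pos (Finset.self_mem_range_succ d)] at hsum
  refine hsum.congr fun t => ?_
  rw [eval_eq_sum_range' (Nat.lt_succ_of_le hP), Finset.sum_div]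

lemma coeff_eq_zero_of_tendsto_sum_cexp_mul_eval {S : Finset ℂ} (hS : ∀ l ∈ S, l.re = 0)
    {P : ℂ → ℂ[X]} {d : ℕ} (hdeg : ∀ l ∈ S, (P l).natDegree ≤ d)
    (h : Tendsto (fun t : ℝ => ∑ l ∈ S, Complex.exp (l * t) * (P l).eval (t : ℂ)) atTop (𝓝 0)) :
    ∀ l ∈ S, (P l).coeff d = 0 := by
  refine eq_zero_of_tendsto_sum_cexp_mul hS _ ?_
  have hscaled : Tendsto (fun t : ℝ => ∑ l ∈ S, Complex.exp (l * t) *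
      ((P l).eval (t : ℂ) / (t : ℂ) ^ d)) atTop (𝓝 0) := by
    refine (h.zero_mul_isBoundedUnder_le (g := fun t : ℝ => ((t : ℂ) ^ d)⁻¹)
      (isBoundedUnder_of_eventually_le (a := 1) ?_)).congr fun t => ?_
    · filter_upwards [eventually_ge_atTop 1] with t ht
      simpa [abs_of_pos (by linarith : (0 : ℝ) < t)] using inv_le_one_of_one_le₀ (one_le_pow₀ ht)
    · simp only [Finset.sum_mul, div_eq_mul_inv, mul_assoc]
  have herror : Tendsto (fun t : ℝ => ∑ l ∈ S, Complex.exp (l * t) *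
      ((P l).eval (t : ℂ) / (t : ℂ) ^ d - (P l).coeff d)) atTop (𝓝 0) := by
    simpa using tendsto_finsetSum S fun l hl => isBoundedUnder_le_mul_tendsto_zero
      (isBoundedUnder_norm_cexp (hS l hl).le)
      (tendsto_sub_nhds_zero_iff.mpr (tendsto_eval_div_pow (hdeg l hl)))
  simpa [mul_sub] using hscaled.sub herror

lemma eq_zero_of_tendsto_sum_cexp_mul_eval {S : Finset ℂ} (hS : ∀ l ∈ S, l.re = 0)
    {P : ℂ → ℂ[X]}
    (h : Tendsto (fun t : ℝ => ∑ l ∈ S, Complex.exp (l * t) * (P l).eval (t : ℂ)) atTop (𝓝 0)) :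
    ∀ l ∈ S, P l = 0 := by
  suffices ∀ d, (∀ l ∈ S, (P l).natDegree ≤ d) → ∀ l ∈ S, P l = 0 from
    this _ fun l hl => Finset.le_sup (f := fun l => (P l).natDegree) hl
  intro d
  induction d with
  | zero =>
    intro hdeg l hl
    rw [eq_C_of_natDegree_le_zero (hdeg l hl),
      coeff_eq_zero_of_tendsto_sum_cexp_mul_eval hS hdeg h l hl, map_zero]
  | succ d ih =>
    intro hdeg
    have htop := coeff_eq_zero_of_tendsto_sum_cexp_mul_eval hS hdeg h
    refine ih fun l hl => natDegree_le_iff_coeff_eq_zero.mpr fun N hN => ?_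
    rcases (Nat.succ_le_of_lt hN).eq_or_lt with rfl | hN'
    · exact htop l hl
    · exact natDegree_le_iff_coeff_eq_zero.mp (hdeg l hl) N hN'

section PolyFun

variable {Y Z : Type*} [AddCommGroup Y] [Module ℂ Y] [AddCommGroup Z] [Module ℂ Z]

lemma IsPolyFun.zero : IsPolyFun (0 : ℝ → Y) := ⟨0, 0, by simp⟩

lemma IsPolyFun.sub {p q : ℝ → Y} (hp : IsPolyFun p) (hq : IsPolyFun q) : IsPolyFun (p - q) := by
  classical
  obtain ⟨d₁, c₁, h₁⟩ := hp
  obtain ⟨d₂, c₂, h₂⟩ := hq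
  refine ⟨d₁ + d₂, fun j => (if j ∈ Finset.range (d₁ + 1) then c₁ j else 0) -
    (if j ∈ Finset.range (d₂ + 1) then c₂ j else 0), fun t => ?_⟩
  simp only [Pi.sub_apply, smul_sub, smul_ite, smul_zero, Finset.sum_sub_distrib,
    Finset.sum_ite_mem, Finset.range_inter_range, h₁, h₂]
  rw [min_eq_right (by omega), min_eq_right (by omega)]

lemma IsPolyFun.map_linear {p : ℝ → Y} (hp : IsPolyFun p) (L : Y →ₗ[ℂ] Z) :
    IsPolyFun fun t => L (p t) := by
  obtain ⟨d, c, hc⟩ := hp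
  exact ⟨d, fun j => L (c j), fun t => by simp [hc]⟩

lemma IsPolyFun.map_conj {p : ℝ → Y} (hp : IsPolyFun p) (L : Y →ₗ⋆[ℂ] Z) :
    IsPolyFun fun t => L (p t) := by
  obtain ⟨d, c, hc⟩ := hp
  exact ⟨d, fun j => L (c j), fun t => by simp [hc]⟩

lemma IsPolyFun.exists_polynomial {p : ℝ → ℂ} (hp : IsPolyFun p) :
    ∃ P : ℂ[X], ∀ t : ℝ, p t = P.eval (t : ℂ) := by
  obtain ⟨d, c, hc⟩ := hp
  refine ⟨∑ j ∈ Finset.range (d + 1), C (c j) * X ^ j, fun t => ?_⟩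
  simp only [hc, eval_finsetSum, eval_mul, eval_C, eval_pow, eval_X, smul_eq_mul]
  exact Finset.sum_congr rfl fun j _ => mul_comm _ _

end PolyFun

namespace FEmem

section Closure

variable {Y Z : Type*} [AddCommGroup Y] [Module ℂ Y] [AddCommGroup Z] [Module ℂ Z]

lemma sub {μ : ℝ} {f g : ℝ → Y} (hf : FEmem μ f) (hg : FEmem μ g) : FEmem μ (f - g) := by
  classical
  obtain ⟨S₁, p₁, hre₁, hp₁, hf⟩ := hf
  obtain ⟨S₂, p₂, hre₂, hp₂, hg⟩ := hg
  refine ⟨S₁ ∪ S₂, fun l => (if l ∈ S₁ then p₁ l else 0) - (if l ∈ S₂ then p₂ l else 0),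
    ?_, fun l _ => ?_, fun t => ?_⟩
  · simp only [Finset.mem_union]
    rintro l (hl | hl)
    exacts [hre₁ l hl, hre₂ l hl]
  · refine IsPolyFun.sub ?_ ?_ <;> split_ifs with hl
    exacts [hp₁ l hl, IsPolyFun.zero, hp₂ l hl, IsPolyFun.zero]
  · simp only [Pi.sub_apply, apply_ite (fun q : ℝ → Y => q t), Pi.zero_apply, smul_sub, smul_ite,
      smul_zero, Finset.sum_sub_distrib, Finset.sum_ite_mem, Finset.union_inter_cancel_left,
      Finset.union_inter_cancel_right, hf, hg]

lemma map_linear {μ : ℝ} {f : ℝ → Y} (hf : FEmem μ f) (L : Y →ₗ[ℂ] Z) :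
    FEmem μ fun t => L (f t) := by
  obtain ⟨S, p, hre, hp, hf⟩ := hf
  exact ⟨S, fun l t => L (p l t), hre, fun l hl => (hp l hl).map_linear L, fun t => by simp [hf]⟩

lemma map_conj {μ : ℝ} {f : ℝ → Y} (hf : FEmem μ f) (L : Y →ₗ⋆[ℂ] Z) :
    FEmem μ fun t => L (f t) := by
  obtain ⟨S, p, hre, hp, hf⟩ := hf
  refine ⟨S.image (starRingEnd ℂ), fun l t => L (p (starRingEnd ℂ l) t),
    Finset.forall_mem_image.mpr fun l hl => by simp [hre l hl],
    Finset.forall_mem_image.mpr fun l hl => by simpa using (hp l hl).map_conj L, fun t => ?_⟩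
  rw [Finset.sum_image (starRingEnd ℂ).injective.injOn]
  simp [hf, ← Complex.exp_conj]

lemma cexp_smul {μ : ℝ} {f : ℝ → Y} (hf : FEmem μ f) (a : ℝ) :
    FEmem (μ + a) fun t => Complex.exp (a * t) • f t := by
  obtain ⟨S, p, hre, hp, hf⟩ := hf
  refine ⟨S.image (· + (a : ℂ)), fun l => p (l - a),
    Finset.forall_mem_image.mpr fun l hl => by simp [hre l hl],
    Finset.forall_mem_image.mpr fun l hl => by simpa using hp l hl, fun t => ?_⟩
  dsimp only
  rw [Finset.sum_image (add_left_injective _).injOn, hf, Finset.smul_sum]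
  refine Finset.sum_congr rfl fun l _ => ?_
  rw [add_sub_cancel_right, smul_smul, ← Complex.exp_add]
  ring_nf

end Closure

lemma eq_zero_of_tendsto_zero {f : ℝ → ℂ} (hf : FEmem 0 f)
    (h : Tendsto f atTop (𝓝 0)) (t : ℝ) : f t = 0 := by
  obtain ⟨S, p, hre, hp, hsum⟩ := hf
  have hpoly : ∀ l, ∃ P : ℂ[X], l ∈ S → ∀ t : ℝ, p l t = P.eval (t : ℂ) := by
    intro l
    by_cases hl : l ∈ S
    · obtain ⟨P, hP⟩ := (hp l hl).exists_polynomial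
      exact ⟨P, fun _ => hP⟩
    · exact ⟨0, fun h => absurd h hl⟩
  choose P hP using hpoly
  have hfP : ∀ t : ℝ, f t = ∑ l ∈ S, Complex.exp (l * t) * (P l).eval (t : ℂ) := fun t => by
    rw [hsum t]
    exact Finset.sum_congr rfl fun l hl => by rw [smul_eq_mul, hP l hl t]
  have hP0 := eq_zero_of_tendsto_sum_cexp_mul_eval hre (h.congr hfP)
  rw [hfP t]
  exact Finset.sum_eq_zero fun l hl => by rw [hP0 l hl, eval_zero, mul_zero]

lemma eq_zero_of_isBigO {Y : Type*} [NormedAddCommGroup Y] [NormedSpace ℂ Y] {μ ν : ℝ}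
    (hμν : μ < ν) {f : ℝ → Y} (hf : FEmem (-μ) f)
    (hO : f =O[atTop] fun t => Real.exp (-ν * t)) (t₀ : ℝ) : f t₀ = 0 := by
  obtain ⟨L, -, hL⟩ := exists_dual_vector'' ℂ (f t₀)
  have hφ : FEmem 0 fun t : ℝ => Complex.exp (μ * t) • L (f t) := by
    simpa using (hf.map_linear L.toLinearMap).cexp_smul μ
  have hdecay : Tendsto (fun t : ℝ => Complex.exp (μ * t) • L (f t)) atTop (𝓝 0) := by
    have hexp : (fun t : ℝ => Complex.exp (μ * t)) =O[atTop] fun t => Real.exp (μ * t) :=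
      Asymptotics.isBigO_of_le _ fun t => by
        rw [Complex.norm_exp, Real.norm_of_nonneg (Real.exp_pos _).le, Complex.re_ofReal_mul,
          Complex.ofReal_re]
    refine (hexp.smul ((L.isBigO_comp f atTop).trans hO)).trans_tendsto ?_
    have hlin : Tendsto (fun t : ℝ => (ν - μ) * t) atTop atTop :=
      tendsto_id.const_mul_atTop (sub_pos.mpr hμν)
    refine (Real.tendsto_exp_neg_atTop_nhds_zero.comp hlin).congr fun t => ?_
    rw [Function.comp_apply, smul_eq_mul, ← Real.exp_add]
    ring_nf
  have h0 := hφ.eq_zero_of_tendsto_zero hdecay t₀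
  rw [smul_eq_mul, hL, mul_eq_zero] at h0
  simpa [Complex.exp_ne_zero] using h0

end FEmem

lemma isBigO_sub_conj_of_expansion {Y F : Type*} [SeminormedAddCommGroup Y] [FunLike F Y Y]
    [AddMonoidHomClass F Y Y] (conj : F) (hconj : ∀ v, ‖conj v‖ = ‖v‖) {T : ℝ} {g : ℝ → Y}
    (hg : ∀ t, T < t → conj (g t) = g t) {gk : ℕ → ℝ → Y} {k : ℕ}
    (hlow : ∀ j < k, ∀ t, conj (gk j t) = gk j t) {b : ℝ → ℝ}
    (hO : (fun t => g t - ∑ j ∈ Finset.range (k + 1), gk j t) =O[atTop] b) :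
    (fun t => gk k t - conj (gk k t)) =O[atTop] b := by
  set R := fun t => g t - ∑ j ∈ Finset.range (k + 1), gk j t
  have hR : ∀ t, T < t → gk k t - conj (gk k t) = conj (R t) - R t := by
    intro t ht
    have hsum :
        ∑ j ∈ Finset.range (k + 1), (gk j t - conj (gk j t)) = gk k t - conj (gk k t) := by
      rw [Finset.sum_range_succ, Finset.sum_eq_zero fun j hj => by
        rw [hlow j (Finset.mem_range.mp hj) t, sub_self], zero_add]
    rw [← hsum, Finset.sum_sub_distrib, ← map_sum]
    simp only [R, map_sub, hg t ht]
    abel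
  refine Asymptotics.IsBigO.congr' ?_ ((eventually_gt_atTop T).mono fun t ht => (hR t ht).symm)
    EventuallyEq.rfl
  exact ((Asymptotics.isBigO_of_le _ fun t => (hconj (R t)).le).sub
    (Asymptotics.isBigO_refl R atTop)).trans hO

/-- `X_ℂ` is modelled by `Y`, and `X` by the fixed points of the conjugation `conjY`. -/
theorem expansion_terms_real_valued_general
    {Y : Type*} [NormedAddCommGroup Y] [InnerProductSpace ℂ Y]
    (conjY : Y → Y)
    (hconj_add : ∀ a b : Y, conjY (a + b) = conjY a + conjY b)
    (hconj_smul : ∀ (c : ℂ) (v : Y), conjY (c • v) = (starRingEnd ℂ c) • conjY v)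
    (hconj_norm : ∀ v : Y, ‖conjY v‖ = ‖v‖)
    (T : ℝ) (g : ℝ → Y) (hgreal : ∀ t : ℝ, T < t → conjY (g t) = g t)
    (μseq : ℕ → ℝ)
    (gk : ℕ → ℝ → Y) (hgk : ∀ k, FEmem (-(μseq k)) (gk k))
    (hgexp : ∀ N : ℕ, ∃ ν > μseq N,
      (fun t => g t - ∑ k ∈ Finset.range (N + 1), gk k t) =O[atTop]
        fun t => Real.exp (-ν * t)) :
    ∀ (k : ℕ) (t : ℝ), conjY (gk k t) = gk k t := by
  let conjL : Y →ₗ⋆[ℂ] Y := { toFun := conjY, map_add' := hconj_add, map_smul' := hconj_smul }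
  suffices h : ∀ k t, gk k t - conjL (gk k t) = 0 from fun k t => (sub_eq_zero.mp (h k t)).symm
  intro k
  induction k using Nat.strong_induction_on with
  | _ k ih =>
    obtain ⟨ν, hν, hO⟩ := hgexp k
    refine ((hgk k).sub ((hgk k).map_conj conjL)).eq_zero_of_isBigO hν ?_
    exact isBigO_sub_conj_of_expansion conjL hconj_norm hgreal
      (fun j hj t => (sub_eq_zero.mp (ih j hj t)).symm) hO

/-- Lemma `invar1`(ii).  The complexification `X_ℂ` of a real inner product
space `X` is modelled by a complex inner product space `Y` with an additive, conjugate-linear,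
norm-preserving involution `conjY` whose fixed-point set is `X`; so "`v ∈ X`" reads
`conjY v = v`.  If `g` is `X`-valued on `(T, ∞)` and, as an `X_ℂ`-valued function, has an
asymptotic expansion `g(t) ∼ ∑_{k=1}^∞ g_k(t)` with `g_k ∈ 𝓕_E(-μ_k, X_ℂ)` for a strictly
increasing divergent sequence `(μ_k)` of nonnegative reals, then `g_k(t) ∈ X` for all `k`
and all `t ∈ ℝ`. -/
theorem expansion_terms_real_valued
    {Y : Type*} [NormedAddCommGroup Y] [InnerProductSpace ℂ Y]
    (conjY : Y → Y)
    (hconj_add : ∀ a b : Y, conjY (a + b) = conjY a + conjY b)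
    (hconj_smul : ∀ (c : ℂ) (v : Y), conjY (c • v) = (starRingEnd ℂ c) • conjY v)
    (hconj_invol : ∀ v : Y, conjY (conjY v) = v)
    (hconj_norm : ∀ v : Y, ‖conjY v‖ = ‖v‖)
    (T : ℝ) (g : ℝ → Y) (hgreal : ∀ t : ℝ, T < t → conjY (g t) = g t)
    (μseq : ℕ → ℝ) (hμnonneg : ∀ k, 0 ≤ μseq k) (hμmono : StrictMono μseq)
    (hμdiv : Tendsto μseq atTop atTop)
    (gk : ℕ → ℝ → Y) (hgk : ∀ k, FEmem (-(μseq k)) (gk k))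
    (hgexp : ∀ N : ℕ, ∃ ν > μseq N,
      (fun t => g t - ∑ k ∈ Finset.range (N + 1), gk k t) =O[atTop]
        fun t => Real.exp (-ν * t)) :
    ∀ (k : ℕ) (t : ℝ), conjY (gk k t) = gk k t :=
  expansion_terms_real_valued_general conjY hconj_add hconj_smul hconj_norm T g hgreal μseq gk hgk
    hgexp
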